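/- (Correctness of the query algorithm, same component) Let v1, v2 be vertices with P v1 = i and P v2 = i. Then dist_G(v1,v2) equals the minimum of dist_{C_i}(v1,v2) and the infimum over b1, b2 ∈ B(C_i) of dist_{C_i}(v1,b1) + dist_BG(b1,b2) + dist_{C_i}(b2,v2). -/

import Mathlib

open scoped ENNReal

namespace SPQ

variable {V : Type*} {ι : Type*}

/-- The length of a walk: the sum of the weights `w` over its consecutive edges. -/
noncomputable def wlen (w : V → V → ℝ≥0∞) {G : SimpleGraph V} {u v : V} (p : G.Walk u v) : ℝ≥0∞ :=
  (p.darts.map fun d => w d.toProd.1 d.toProd.2).sum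

/-- The shortest-path distance: infimum of lengths of all walks (⊤ if none exists). -/
noncomputable def gdist (G : SimpleGraph V) (w : V → V → ℝ≥0∞) (u v : V) : ℝ≥0∞ :=
  ⨅ p : G.Walk u v, wlen w p

/-- The component `C_i`: the subgraph of `G` induced on `P ⁻¹ {i}`
(as a graph on `V`: edges of `G` with both endpoints mapped to `i` by `P`). -/
def comp (G : SimpleGraph V) (P : V → ι) (i : ι) : SimpleGraph V where
  Adj u v := G.Adj u v ∧ P u = i ∧ P v = i
  symm := ⟨fun _ _ h => ⟨h.1.symm, h.2.2, h.2.1⟩⟩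
  loopless := ⟨fun u h => G.irrefl h.1⟩

/-- The boundary `B(C_i)`: vertices of component `i` having a `G`-neighbor
in a different component. -/
def bdry (G : SimpleGraph V) (P : V → ι) (i : ι) : Set V :=
  {v | P v = i ∧ ∃ u, G.Adj v u ∧ P u ≠ i}

/-- The set `B` of all boundary vertices. -/
def bdryAll (G : SimpleGraph V) (P : V → ι) : Set V :=
  ⋃ i, bdry G P i

/-- The boundary graph `BG`: distinct boundary vertices `b1, b2` are adjacent
iff `P b1 = P b2` or `G.Adj b1 b2`. -/
def BGraph (G : SimpleGraph V) (P : V → ι) : SimpleGraph V where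
  Adj b1 b2 := b1 ≠ b2 ∧ b1 ∈ bdryAll G P ∧ b2 ∈ bdryAll G P ∧ (P b1 = P b2 ∨ G.Adj b1 b2)
  symm := by
    refine ⟨fun u v h => ?_⟩
    refine ⟨h.1.symm, h.2.2.1, h.2.1, ?_⟩
    rcases h.2.2.2 with h' | h'
    · exact Or.inl h'.symm
    · exact Or.inr h'.symm
  loopless := ⟨fun u h => h.1 rfl⟩

open Classical in
/-- The edge weight of the boundary graph:
`wt b1 b2 = dist_{C_{P b1}}(b1, b2)` if `P b1 = P b2`, and `w b1 b2` otherwise. -/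
noncomputable def wt (G : SimpleGraph V) (P : V → ι) (w : V → V → ℝ≥0∞) (b1 b2 : V) : ℝ≥0∞ :=
  if P b1 = P b2 then gdist (comp G P (P b1)) w b1 b2 else w b1 b2

/-!
Read the right-hand side as a function `queryDist G P w i y v2` of the start vertex `y`, the
first boundary vertex being taken in the component of `y`. It dominates `dist_G(y, v2)` by the
triangle inequality, since every edge of `BG` is at least as long as the `G`-distance of its
ends. Conversely, it vanishes at `v2` and grows by at most `w y z` along every edge `y z` of `G`: inside a component
by the triangle inequality in that component, and across components because `y` and `z` are
then boundary vertices joined by an edge of `BG` of weight `w y z`. A potential with this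
property is bounded by the `G`-distance to `v2`.
-/

section Distance
variable {G H : SimpleGraph V} {w w' : V → V → ℝ≥0∞} {u v x : V}

open SimpleGraph

@[simp] lemma wlen_nil : wlen w (Walk.nil : G.Walk u u) = 0 := rfl

@[simp] lemma wlen_cons (h : G.Adj u v) (p : G.Walk v x) :
    wlen w (Walk.cons h p) = w u v + wlen w p := by
  simp [wlen]

lemma gdist_le_wlen (p : G.Walk u v) : gdist G w u v ≤ wlen w p := iInf_le _ p

@[simp] lemma gdist_self : gdist G w u u = 0 :=
  nonpos_iff_eq_zero.1 (gdist_le_wlen Walk.nil)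

lemma gdist_le_add_gdist_of_adj (h : G.Adj u v) : gdist G w u x ≤ w u v + gdist G w v x := by
  unfold gdist
  rw [ENNReal.add_iInf]
  exact le_iInf fun p => (iInf_le _ (Walk.cons h p)).trans_eq (wlen_cons h p)

lemma le_gdist_add_of_forall_adj {f : V → ℝ≥0∞} (hf : ∀ u v, G.Adj u v → f u ≤ w u v + f v)
    (u v : V) : f u ≤ gdist G w u v + f v := by
  rw [gdist, ENNReal.iInf_add]
  refine le_iInf fun p => ?_
  induction p with
  | nil => simp
  | @cons u x v h p ih =>
    calc f u ≤ w u x + f x := hf u x h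
      _ ≤ w u x + (wlen w p + f v) := by gcongr
      _ = wlen w (Walk.cons h p) + f v := by rw [wlen_cons, add_assoc]

lemma gdist_triangle : gdist G w u v ≤ gdist G w u x + gdist G w x v := by
  simpa using le_gdist_add_of_forall_adj (f := fun y => gdist G w y v)
    (fun _ _ h => gdist_le_add_gdist_of_adj h) u x

lemma gdist_triangle₃ {y : V} :
    gdist G w u v ≤ gdist G w u x + gdist G w x y + gdist G w y v :=
  calc gdist G w u v ≤ gdist G w u y + gdist G w y v := gdist_triangle
    _ ≤ gdist G w u x + gdist G w x y + gdist G w y v := by gcongr; exact gdist_triangle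

lemma gdist_le_of_adj (h : G.Adj u v) : gdist G w u v ≤ w u v := by
  simpa using gdist_le_add_gdist_of_adj (w := w) (x := v) h

lemma gdist_le_gdist_of_forall_adj (hH : ∀ u v, H.Adj u v → gdist G w u v ≤ w' u v) :
    gdist G w u v ≤ gdist H w' u v := by
  simpa using le_gdist_add_of_forall_adj (f := fun y => gdist G w y v)
    (fun y z h => gdist_triangle.trans (add_le_add_left (hH y z h) _)) u v

lemma gdist_mono (hle : H ≤ G) : gdist G w u v ≤ gdist H w u v :=
  gdist_le_gdist_of_forall_adj fun _ _ h => gdist_le_of_adj (hle h)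

end Distance

section Partition
variable {G : SimpleGraph V} {w : V → V → ℝ≥0∞} {P : V → ι} {i : ι} {u v y z : V}

lemma comp_le : comp G P i ≤ G := fun _ _ h => h.1

lemma gdist_comp_eq_top (hu : P u ≠ i) (huv : u ≠ v) : gdist (comp G P i) w u v = ⊤ := by
  refine eq_top_iff.2 (le_iInf fun p => ?_)
  cases p with
  | nil => exact absurd rfl huv
  | cons h _ => exact absurd h.2.1 hu

lemma mem_bdry_of_adj (h : G.Adj y z) (hP : P y ≠ P z) : y ∈ bdry G P (P y) :=
  ⟨rfl, z, h, hP.symm⟩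

lemma mem_bdryAll_of_mem_bdry (h : u ∈ bdry G P i) : u ∈ bdryAll G P :=
  Set.mem_iUnion.2 ⟨i, h⟩

lemma gdist_le_wt (h : (BGraph G P).Adj u v) : gdist G w u v ≤ wt G P w u v := by
  unfold wt
  split_ifs with hP
  · exact gdist_mono comp_le
  · exact gdist_le_of_adj (h.2.2.2.resolve_left hP)

lemma gdist_le_gdist_BGraph : gdist G w u v ≤ gdist (BGraph G P) (wt G P w) u v :=
  gdist_le_gdist_of_forall_adj fun _ _ => gdist_le_wt

lemma gdist_BGraph_le_gdist_comp (hu : u ∈ bdry G P i) (hv : v ∈ bdry G P i) :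
    gdist (BGraph G P) (wt G P w) u v ≤ gdist (comp G P i) w u v := by
  obtain rfl | huv := eq_or_ne u v
  · simp
  have hadj : (BGraph G P).Adj u v := ⟨huv, mem_bdryAll_of_mem_bdry hu,
    mem_bdryAll_of_mem_bdry hv, Or.inl (hu.1.trans hv.1.symm)⟩
  refine (gdist_le_of_adj hadj).trans_eq ?_
  rw [wt, if_pos (hu.1.trans hv.1.symm), hu.1]

lemma gdist_BGraph_le_of_adj (h : G.Adj y z) (hP : P y ≠ P z) :
    gdist (BGraph G P) (wt G P w) y z ≤ w y z := by
  have hadj : (BGraph G P).Adj y z := ⟨fun hyz => hP (congrArg P hyz),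
    mem_bdryAll_of_mem_bdry (mem_bdry_of_adj h hP),
    mem_bdryAll_of_mem_bdry (mem_bdry_of_adj h.symm hP.symm), Or.inr h⟩
  exact (gdist_le_of_adj hadj).trans_eq (by rw [wt, if_neg hP])

end Partition

section Query
variable {G : SimpleGraph V} {P : V → ι} {w : V → V → ℝ≥0∞} (i : ι) {v y z : V}

variable (G P w) in
noncomputable def viaBdryDist (y v : V) : ℝ≥0∞ :=
  ⨅ b1 ∈ bdry G P (P y), ⨅ b2 ∈ bdry G P i,
    gdist (comp G P (P y)) w y b1 + gdist (BGraph G P) (wt G P w) b1 b2 +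
      gdist (comp G P i) w b2 v

variable {i}

lemma viaBdryDist_le_of_mem_bdry {b : V} (hy : y ∈ bdry G P (P y)) (hb : b ∈ bdry G P i) :
    viaBdryDist G P w i y v ≤
      gdist (BGraph G P) (wt G P w) y b + gdist (comp G P i) w b v := by
  refine (iInf₂_le_of_le y hy (iInf₂_le b hb)).trans_eq ?_
  simp

lemma viaBdryDist_le_add_of_adj_of_eq (h : G.Adj y z) (hP : P y = P z) :
    viaBdryDist G P w i y v ≤ w y z + viaBdryDist G P w i z v := by
  simp only [viaBdryDist, ENNReal.add_iInf, ← hP]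
  refine iInf₂_mono fun b1 _ => iInf₂_mono fun b2 _ => ?_
  rw [← add_assoc, ← add_assoc]
  gcongr
  exact gdist_le_add_gdist_of_adj ⟨h, rfl, hP.symm⟩

lemma viaBdryDist_le_add_of_adj_of_ne (h : G.Adj y z) (hP : P y ≠ P z) :
    viaBdryDist G P w i y v ≤ w y z + viaBdryDist G P w i z v := by
  simp only [viaBdryDist, ENNReal.add_iInf]
  refine le_iInf₂ fun b1 hb1 => le_iInf₂ fun b2 hb2 => ?_
  calc viaBdryDist G P w i y v
      ≤ gdist (BGraph G P) (wt G P w) y b2 + gdist (comp G P i) w b2 v :=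
        viaBdryDist_le_of_mem_bdry (mem_bdry_of_adj h hP) hb2
    _ ≤ (gdist (BGraph G P) (wt G P w) y z + gdist (BGraph G P) (wt G P w) z b1 +
          gdist (BGraph G P) (wt G P w) b1 b2) + gdist (comp G P i) w b2 v := by
        gcongr
        exact gdist_triangle₃
    _ ≤ w y z + (gdist (comp G P (P z)) w z b1 + gdist (BGraph G P) (wt G P w) b1 b2 +
          gdist (comp G P i) w b2 v) := by
        rw [← add_assoc, ← add_assoc]
        gcongr
        · exact gdist_BGraph_le_of_adj h hP
        · exact gdist_BGraph_le_gdist_comp (mem_bdry_of_adj h.symm (Ne.symm hP)) hb1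

lemma viaBdryDist_le_add_gdist_comp_of_adj_of_ne (hv : P v = i) (h : G.Adj y z)
    (hP : P y ≠ P z) : viaBdryDist G P w i y v ≤ w y z + gdist (comp G P i) w z v := by
  by_cases hz : P z = i
  · calc viaBdryDist G P w i y v
        ≤ gdist (BGraph G P) (wt G P w) y z + gdist (comp G P i) w z v :=
          viaBdryDist_le_of_mem_bdry (mem_bdry_of_adj h hP) (hz ▸ mem_bdry_of_adj h.symm hP.symm)
      _ ≤ w y z + gdist (comp G P i) w z v := by gcongr; exact gdist_BGraph_le_of_adj h hP
  · rw [gdist_comp_eq_top hz (ne_of_apply_ne P (by rwa [hv])), add_top]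
    exact le_top

variable (G P w i) in
noncomputable def queryDist (y v : V) : ℝ≥0∞ :=
  min (gdist (comp G P i) w y v) (viaBdryDist G P w i y v)

lemma queryDist_le_add_of_adj (hv : P v = i) (h : G.Adj y z) :
    queryDist G P w i y v ≤ w y z + queryDist G P w i z v := by
  rw [queryDist, queryDist, ← min_add_add_left]
  by_cases hP : P y = P z
  · refine min_le_min ?_ (viaBdryDist_le_add_of_adj_of_eq h hP)
    by_cases hy : P y = i
    · exact gdist_le_add_gdist_of_adj ⟨h, hy, hP ▸ hy⟩
    · have hz : P z ≠ i := hP ▸ hy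
      rw [gdist_comp_eq_top hz (ne_of_apply_ne P (by rwa [hv])), add_top]
      exact le_top
  · exact (min_le_right _ _).trans (le_min
      (viaBdryDist_le_add_gdist_comp_of_adj_of_ne hv h hP)
      (viaBdryDist_le_add_of_adj_of_ne h hP))

lemma gdist_le_viaBdryDist : gdist G w y v ≤ viaBdryDist G P w i y v := by
  refine le_iInf₂ fun b1 _ => le_iInf₂ fun b2 _ => ?_
  calc gdist G w y v ≤ gdist G w y b1 + gdist G w b1 b2 + gdist G w b2 v := gdist_triangle₃
    _ ≤ _ := by gcongr <;> first | exact gdist_mono comp_le | exact gdist_le_gdist_BGraph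

lemma gdist_le_queryDist : gdist G w y v ≤ queryDist G P w i y v :=
  le_min (gdist_mono comp_le) gdist_le_viaBdryDist

lemma queryDist_le_gdist (hv : P v = i) : queryDist G P w i y v ≤ gdist G w y v := by
  simpa [queryDist] using
    le_gdist_add_of_forall_adj (fun _ _ => queryDist_le_add_of_adj hv) y v

end Query

theorem stmt10_general {V : Type*} {ι : Type*}
    (G : SimpleGraph V) (w : V → V → ℝ≥0∞)
    (P : V → ι) (i : ι) (v1 v2 : V) (h1 : P v1 = i) (h2 : P v2 = i) :
    gdist G w v1 v2 =
      min (gdist (comp G P i) w v1 v2)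
        (⨅ b1 ∈ bdry G P i, ⨅ b2 ∈ bdry G P i,
          (gdist (comp G P i) w v1 b1 + gdist (BGraph G P) (wt G P w) b1 b2 +
            gdist (comp G P i) w b2 v2)) := by
  subst h1
  exact le_antisymm gdist_le_queryDist (queryDist_le_gdist h2)

/-- Correctness of the query algorithm, same component: Let `v1, v2` be
vertices with `P v1 = i` and `P v2 = i`. Then `dist_G(v1,v2)` equals the minimum of
`dist_{C_i}(v1,v2)` and the infimum over `b1, b2 ∈ B(C_i)` of
`dist_{C_i}(v1,b1) + dist_BG(b1,b2) + dist_{C_i}(b2,v2)`. -/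
theorem stmt10 {V : Type*} {ι : Type*} [Fintype V] [Fintype ι]
    (G : SimpleGraph V) (w : V → V → ℝ≥0∞)
    (hsymm : ∀ u v, w u v = w v u) (hfin : ∀ u v, G.Adj u v → w u v < ⊤)
    (P : V → ι) (i : ι) (v1 v2 : V) (h1 : P v1 = i) (h2 : P v2 = i) :
    gdist G w v1 v2 =
      min (gdist (comp G P i) w v1 v2)
        (⨅ b1 ∈ bdry G P i, ⨅ b2 ∈ bdry G P i,
          (gdist (comp G P i) w v1 b1 + gdist (BGraph G P) (wt G P w) b1 b2 +
            gdist (comp G P i) w b2 v2)) :=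
  stmt10_general G w P i v1 v2 h1 h2

end SPQ
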